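/- The truncated braid group B_3(4) = ⟨σ₁, σ₂ | σ₁σ₂σ₁ = σ₂σ₁σ₂, σ₁⁴ = σ₂⁴ = 1⟩ has order 96. -/

import Mathlib

/-- The relations of the truncated braid group
`B₃(d) = ⟨σ₁, σ₂ | σ₁σ₂σ₁ = σ₂σ₁σ₂, σ₁^d = σ₂^d = 1⟩`. -/
def truncatedBraid3Rels (d : ℕ) : Set (FreeGroup (Fin 2)) :=
  {FreeGroup.of 0 * FreeGroup.of 1 * FreeGroup.of 0 *
      (FreeGroup.of 1 * FreeGroup.of 0 * FreeGroup.of 1)⁻¹,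
   FreeGroup.of 0 ^ d, FreeGroup.of 1 ^ d}

/-- The truncated braid group `B₃(d)`. -/
def TruncatedBraid3 (d : ℕ) : Type := PresentedGroup (truncatedBraid3Rels d)

instance (d : ℕ) : Group (TruncatedBraid3 d) := inferInstanceAs (Group (PresentedGroup _))

/-- The generator `σ₁` of `B₃(d)`. -/
def TruncatedBraid3.σ₁ (d : ℕ) : TruncatedBraid3 d := PresentedGroup.of 0

/-- The generator `σ₂` of `B₃(d)`. -/
def TruncatedBraid3.σ₂ (d : ℕ) : TruncatedBraid3 d := PresentedGroup.of 1

/-- The full twist `Δ² = (σ₁σ₂)³` in `B₃(d)`. -/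
def TruncatedBraid3.fullTwist (d : ℕ) : TruncatedBraid3 d :=
  (TruncatedBraid3.σ₁ d * TruncatedBraid3.σ₂ d) ^ 3

/-!
The full twist `Δ² = (σ₁σ₂)³` is central in `B₃(d)`. In `B₃(4)` the elements
`(σ₁²σ₂²)²` and `(σ₂²σ₁²)²`, which are inverse to each other, both equal `Δ⁻⁴`, so `Δ⁸ = 1`.
Hence every element is `r σ₁^a Δ^(2b)` with `a, b < 4` and `r` one of six left coset
representatives of `⟨σ₁, Δ²⟩`: the finite set of these words contains `1` and is stable under
left multiplication by `σ₁` and `σ₂`. The 96 words are distinct because their images under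
`σ₁ ↦ !![3, 1; 0, 1]`, `σ₂ ↦ !![1, 0; 2, 3]` in `GL₂(𝔽₅)` are.
-/

open scoped Pointwise in
theorem Set.eq_univ_of_forall_mul_mem {G : Type*} [Group G] {T S : Set G}
    (hT : Subgroup.closure T = ⊤) (hS : S.Finite) (h1 : 1 ∈ S)
    (hmul : ∀ g ∈ T, ∀ x ∈ S, g * x ∈ S) : S = Set.univ := by
  have hstab : Subgroup.closure T ≤ MulAction.stabilizer G S :=
    (Subgroup.closure_le _).2 fun g hg => (MulAction.mem_stabilizer_set' hS).2 (hmul g hg)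
  rw [hT] at hstab
  refine Set.eq_univ_of_forall fun g => ?_
  have hg : g • S = S := hstab trivial
  have := Set.smul_mem_smul_set (a := g) h1
  rwa [hg, smul_eq_mul, mul_one] at this

section PowFour

variable {G : Type*} [Group G] {a b z : G}

theorem sq_inv_eq_sq_of_pow_four (ha : a ^ 4 = 1) : (a ^ 2)⁻¹ = a ^ 2 :=
  inv_eq_of_mul_eq_one_right (by rw [← pow_add, ha])

theorem sq_mul_sq_mul_sq_sq_eq_one (ha : a ^ 4 = 1) (hb : b ^ 4 = 1)
    (hz : z = a ^ 2 * b * a ^ 2 * b) (hza : Commute z a) (hzb : Commute z b) :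
    z ^ 2 * (a ^ 2 * b ^ 2) ^ 2 = 1 := by
  have hconj : a ^ 2 * z * b ^ 2 = b * a ^ 2 * b⁻¹ := calc
    a ^ 2 * z * b ^ 2 = a ^ 4 * (b * a ^ 2 * b⁻¹) * b ^ 4 := by rw [hz]; group
    _ = b * a ^ 2 * b⁻¹ := by rw [ha, hb, one_mul, mul_one]
  calc z ^ 2 * (a ^ 2 * b ^ 2) ^ 2 = (a ^ 2 * z * b ^ 2) ^ 2 := by
        rw [← ((hza.pow_right 2).mul_right (hzb.pow_right 2)).mul_pow, ← mul_assoc,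
          (hza.pow_right 2).eq]
    _ = b * a ^ 4 * b⁻¹ := by rw [hconj]; simp only [pow_succ, pow_zero, one_mul]; group
    _ = 1 := by rw [ha, mul_one, mul_inv_cancel]

end PowFour

namespace TruncatedBraid3

section Braid

variable {d : ℕ}

theorem σ₁_mul_σ₂_mul_σ₁ : σ₁ d * σ₂ d * σ₁ d = σ₂ d * σ₁ d * σ₂ d :=
  PresentedGroup.mk_eq_mk_of_mul_inv_mem (Set.mem_insert _ _)

theorem σ₁_pow_eq_one : σ₁ d ^ d = 1 :=
  PresentedGroup.one_of_mem (Set.mem_insert_of_mem _ (Set.mem_insert _ _))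

theorem σ₂_pow_eq_one : σ₂ d ^ d = 1 :=
  PresentedGroup.one_of_mem (Set.mem_insert_of_mem _ (Set.mem_insert_of_mem _ rfl))

theorem closure_σ₁_σ₂ : Subgroup.closure {σ₁ d, σ₂ d} = ⊤ := by
  have : ({σ₁ d, σ₂ d} : Set (TruncatedBraid3 d)) = Set.range PresentedGroup.of := by
    rw [← Matrix.range_cons_cons_empty _ _ ![]]
    congr 1
    ext i
    fin_cases i <;> rfl
  rw [this]
  exact PresentedGroup.closure_range_of _

theorem σ₁_mul_σ₂_mul_σ₁_inv : σ₁ d * σ₂ d * (σ₁ d)⁻¹ = (σ₂ d)⁻¹ * σ₁ d * σ₂ d := calc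
  σ₁ d * σ₂ d * (σ₁ d)⁻¹ = (σ₂ d)⁻¹ * (σ₂ d * σ₁ d * σ₂ d) * (σ₁ d)⁻¹ := by group
  _ = (σ₂ d)⁻¹ * σ₁ d * σ₂ d := by rw [← σ₁_mul_σ₂_mul_σ₁]; group

def halfTwist (d : ℕ) : TruncatedBraid3 d := σ₁ d * σ₂ d * σ₁ d

theorem semiconjBy_halfTwist_σ₁ : SemiconjBy (halfTwist d) (σ₁ d) (σ₂ d) := by
  rw [SemiconjBy, halfTwist]
  conv_lhs => rw [σ₁_mul_σ₂_mul_σ₁]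
  simp only [mul_assoc]

theorem semiconjBy_halfTwist_σ₂ : SemiconjBy (halfTwist d) (σ₂ d) (σ₁ d) := by
  rw [SemiconjBy, halfTwist]
  conv_rhs => rw [σ₁_mul_σ₂_mul_σ₁]
  simp only [mul_assoc]

theorem fullTwist_eq_halfTwist_sq : fullTwist d = halfTwist d ^ 2 := by
  rw [fullTwist, pow_two]
  conv_rhs => arg 2; rw [halfTwist, σ₁_mul_σ₂_mul_σ₁]
  simp only [halfTwist, pow_three, mul_assoc]

theorem fullTwist_eq_σ₂_mul_σ₁_pow_three : fullTwist d = (σ₂ d * σ₁ d) ^ 3 := by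
  rw [fullTwist_eq_halfTwist_sq, pow_two]
  conv_lhs => arg 1; rw [halfTwist, σ₁_mul_σ₂_mul_σ₁]
  simp only [halfTwist, pow_three, mul_assoc]

theorem commute_fullTwist (g : TruncatedBraid3 d) : Commute (fullTwist d) g := by
  suffices ⊤ ≤ Subgroup.centralizer {fullTwist d} from
    (Subgroup.mem_centralizer_singleton_iff.1 (this trivial)).symm
  rw [← closure_σ₁_σ₂, Subgroup.closure_le, Set.insert_subset_iff, Set.singleton_subset_iff,
    SetLike.mem_coe, SetLike.mem_coe, Subgroup.mem_centralizer_singleton_iff,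
    Subgroup.mem_centralizer_singleton_iff, fullTwist_eq_halfTwist_sq, pow_two]
  exact ⟨(semiconjBy_halfTwist_σ₂.mul_left semiconjBy_halfTwist_σ₁).symm,
    (semiconjBy_halfTwist_σ₁.mul_left semiconjBy_halfTwist_σ₂).symm⟩

theorem fullTwist_eq_σ₁_sq_mul_σ₂_mul_σ₁_sq_mul_σ₂ :
    fullTwist d = σ₁ d ^ 2 * σ₂ d * σ₁ d ^ 2 * σ₂ d := calc
  fullTwist d = σ₁ d * (σ₂ d * σ₁ d * σ₂ d) * σ₁ d * σ₂ d := by rw [fullTwist, pow_three]; group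
  _ = σ₁ d ^ 2 * σ₂ d * σ₁ d ^ 2 * σ₂ d := by rw [← σ₁_mul_σ₂_mul_σ₁]; simp only [sq]; group

theorem fullTwist_eq_σ₂_sq_mul_σ₁_mul_σ₂_sq_mul_σ₁ :
    fullTwist d = σ₂ d ^ 2 * σ₁ d * σ₂ d ^ 2 * σ₁ d := calc
  fullTwist d = σ₂ d * (σ₁ d * σ₂ d * σ₁ d) * σ₂ d * σ₁ d := by
    rw [fullTwist_eq_σ₂_mul_σ₁_pow_three, pow_three]; group
  _ = σ₂ d ^ 2 * σ₁ d * σ₂ d ^ 2 * σ₁ d := by rw [σ₁_mul_σ₂_mul_σ₁]; simp only [sq]; group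

end Braid

theorem fullTwist_four_pow_four : fullTwist 4 ^ 4 = 1 := by
  have h₁₂ := sq_mul_sq_mul_sq_sq_eq_one σ₁_pow_eq_one σ₂_pow_eq_one
    fullTwist_eq_σ₁_sq_mul_σ₂_mul_σ₁_sq_mul_σ₂ (commute_fullTwist _) (commute_fullTwist _)
  have h₂₁ := sq_mul_sq_mul_sq_sq_eq_one σ₂_pow_eq_one σ₁_pow_eq_one
    fullTwist_eq_σ₂_sq_mul_σ₁_mul_σ₂_sq_mul_σ₁ (commute_fullTwist _) (commute_fullTwist _)
  rw [← sq_inv_eq_sq_of_pow_four σ₁_pow_eq_one, ← sq_inv_eq_sq_of_pow_four σ₂_pow_eq_one,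
    ← mul_inv_rev, inv_pow, mul_inv_eq_one] at h₂₁
  rw [show 4 = 2 + 2 from rfl, pow_add]
  nth_rw 2 [h₂₁]
  exact h₁₂

theorem σ₁_four_inv : (σ₁ 4)⁻¹ = σ₁ 4 ^ 3 :=
  inv_eq_of_mul_eq_one_right (by rw [← pow_succ', σ₁_pow_eq_one])

theorem σ₂_four_inv : (σ₂ 4)⁻¹ = σ₂ 4 ^ 3 :=
  inv_eq_of_mul_eq_one_right (by rw [← pow_succ', σ₂_pow_eq_one])

theorem σ₁_mul_σ₂_sq : σ₁ 4 * σ₂ 4 ^ 2 = σ₂ 4 ^ 2 * σ₁ 4 ^ 3 * fullTwist 4 := calc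
  σ₁ 4 * σ₂ 4 ^ 2 = σ₂ 4 ^ 4 * σ₁ 4 * σ₂ 4 ^ 2 * σ₁ 4 ^ 4 := by
    rw [σ₁_pow_eq_one, σ₂_pow_eq_one]; group
  _ = σ₂ 4 ^ 2 * fullTwist 4 * σ₁ 4 ^ 3 := by
    rw [fullTwist_eq_σ₂_sq_mul_σ₁_mul_σ₂_sq_mul_σ₁]; group
  _ = σ₂ 4 ^ 2 * σ₁ 4 ^ 3 * fullTwist 4 := by rw [mul_assoc, (commute_fullTwist _).eq, mul_assoc]

theorem σ₂_pow_three : σ₂ 4 ^ 3 = σ₁ 4 ^ 2 * σ₂ 4 * σ₁ 4 ^ 2 * fullTwist 4 ^ 3 := calc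
  σ₂ 4 ^ 3 = (σ₂ 4)⁻¹ * fullTwist 4 ^ 4 := by rw [fullTwist_four_pow_four, mul_one, σ₂_four_inv]
  _ = fullTwist 4 * (σ₂ 4)⁻¹ * fullTwist 4 ^ 3 := by
    rw [(commute_fullTwist _).inv_right.eq, mul_assoc, ← pow_succ']
  _ = σ₁ 4 ^ 2 * σ₂ 4 * σ₁ 4 ^ 2 * fullTwist 4 ^ 3 := by
    rw [← eq_mul_inv_of_mul_eq fullTwist_eq_σ₁_sq_mul_σ₂_mul_σ₁_sq_mul_σ₂.symm]

theorem σ₂_mul_σ₁_sq_mul_σ₂ : σ₂ 4 * (σ₁ 4 ^ 2 * σ₂ 4) = σ₁ 4 ^ 2 * fullTwist 4 := calc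
  σ₂ 4 * (σ₁ 4 ^ 2 * σ₂ 4) = σ₁ 4 ^ 4 * σ₂ 4 * σ₁ 4 ^ 2 * σ₂ 4 := by rw [σ₁_pow_eq_one]; group
  _ = σ₁ 4 ^ 2 * fullTwist 4 := by rw [fullTwist_eq_σ₁_sq_mul_σ₂_mul_σ₁_sq_mul_σ₂]; group

theorem σ₂_mul_σ₁_pow_three_mul_σ₂ :
    σ₂ 4 * (σ₁ 4 ^ 3 * σ₂ 4) = σ₁ 4 ^ 3 * σ₂ 4 * σ₁ 4 ^ 3 * fullTwist 4 := calc
  σ₂ 4 * (σ₁ 4 ^ 3 * σ₂ 4) = (σ₁ 4)⁻¹ * (σ₁ 4 * σ₂ 4 * (σ₁ 4)⁻¹) * σ₂ 4 := by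
    rw [← σ₁_four_inv]; group
  _ = (σ₁ 4)⁻¹ * (σ₂ 4)⁻¹ * (σ₁ 4 * σ₂ 4 ^ 2) := by
    rw [σ₁_mul_σ₂_mul_σ₁_inv]; simp only [sq]; group
  _ = σ₁ 4 ^ 3 * σ₂ 4 * σ₁ 4 ^ 3 * fullTwist 4 := by
    rw [σ₁_mul_σ₂_sq, ← σ₁_four_inv]; simp only [sq]; group

section NormalForm

variable {G H : Type*} [Group G] [Group H]

def cosetRep (s t : G) : Fin 6 → G :=
  ![1, t, s * t, t ^ 2, s ^ 2 * t, s ^ 3 * t]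

def normalForm (s t : G) (p : Fin 6 × Fin 4 × Fin 4) : G :=
  cosetRep s t p.1 * s ^ (p.2.1 : ℕ) * ((s * t) ^ 3) ^ (p.2.2 : ℕ)

theorem map_normalForm (f : G →* H) (s t : G) (p : Fin 6 × Fin 4 × Fin 4) :
    f (normalForm s t p) = normalForm (f s) (f t) p := by
  obtain ⟨i, a, b⟩ := p
  fin_cases i <;> simp [normalForm, cosetRep]

end NormalForm

theorem σ₁_mul_cosetRep (i : Fin 6) : ∃ j a b,
    σ₁ 4 * cosetRep (σ₁ 4) (σ₂ 4) i = cosetRep (σ₁ 4) (σ₂ 4) j * σ₁ 4 ^ a * fullTwist 4 ^ b := by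
  fin_cases i
  · exact ⟨0, 1, 0, by simp [cosetRep]⟩
  · exact ⟨2, 0, 0, by simp [cosetRep]⟩
  · exact ⟨4, 0, 0, by simp [cosetRep, sq, mul_assoc]⟩
  · exact ⟨3, 3, 1, by simpa [cosetRep] using σ₁_mul_σ₂_sq⟩
  · exact ⟨5, 0, 0, by simp [cosetRep, pow_succ, mul_assoc]⟩
  · exact ⟨1, 0, 0, by simp [cosetRep, ← mul_assoc, ← pow_succ', σ₁_pow_eq_one]⟩

theorem σ₂_mul_cosetRep (i : Fin 6) : ∃ j a b,
    σ₂ 4 * cosetRep (σ₁ 4) (σ₂ 4) i = cosetRep (σ₁ 4) (σ₂ 4) j * σ₁ 4 ^ a * fullTwist 4 ^ b := by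
  fin_cases i
  · exact ⟨1, 0, 0, by simp [cosetRep]⟩
  · exact ⟨3, 0, 0, by simp [cosetRep, sq]⟩
  · exact ⟨2, 1, 0, by simp [cosetRep, ← mul_assoc, σ₁_mul_σ₂_mul_σ₁]⟩
  · exact ⟨4, 2, 3, by simpa [cosetRep, ← pow_succ'] using σ₂_pow_three⟩
  · exact ⟨0, 2, 1, by simpa [cosetRep] using σ₂_mul_σ₁_sq_mul_σ₂⟩
  · exact ⟨5, 3, 1, by simpa [cosetRep] using σ₂_mul_σ₁_pow_three_mul_σ₂⟩

theorem cosetRep_mul_mem_range_normalForm (i : Fin 6) (a b : ℕ) :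
    cosetRep (σ₁ 4) (σ₂ 4) i * σ₁ 4 ^ a * fullTwist 4 ^ b ∈
      Set.range (normalForm (σ₁ 4) (σ₂ 4)) :=
  ⟨(i, ⟨a % 4, Nat.mod_lt _ four_pos⟩, ⟨b % 4, Nat.mod_lt _ four_pos⟩), by
    rw [normalForm, ← fullTwist, ← pow_eq_pow_mod _ σ₁_pow_eq_one,
      ← pow_eq_pow_mod _ fullTwist_four_pow_four]⟩

theorem normalForm_surjective : Function.Surjective (normalForm (σ₁ 4) (σ₂ 4)) := by
  refine Set.range_eq_univ.1 <| Set.eq_univ_of_forall_mul_mem closure_σ₁_σ₂ (Set.finite_range _)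
    ⟨(0, 0, 0), by simp [normalForm, cosetRep]⟩ ?_
  rintro g hg _ ⟨⟨i, a, b⟩, rfl⟩
  obtain ⟨j, a', b', h⟩ : ∃ j a' b', g * cosetRep (σ₁ 4) (σ₂ 4) i =
      cosetRep (σ₁ 4) (σ₂ 4) j * σ₁ 4 ^ a' * fullTwist 4 ^ b' := by
    rcases hg with rfl | rfl
    exacts [σ₁_mul_cosetRep i, σ₂_mul_cosetRep i]
  convert cosetRep_mul_mem_range_normalForm j (a' + a) (b' + b) using 1
  rw [normalForm, ← fullTwist, ← mul_assoc, ← mul_assoc, h, pow_add, pow_add]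
  simp only [mul_assoc]
  rw [← mul_assoc (fullTwist 4 ^ b'), ((commute_fullTwist _).pow_left _).eq, mul_assoc]

def glσ₁ : GL (Fin 2) (ZMod 5) := ⟨!![3, 1; 0, 1], !![2, 3; 0, 1], by decide, by decide⟩

def glσ₂ : GL (Fin 2) (ZMod 5) := ⟨!![1, 0; 2, 3], !![1, 0; 1, 2], by decide, by decide⟩

def toGL : TruncatedBraid3 4 →* GL (Fin 2) (ZMod 5) :=
  PresentedGroup.toGroup (f := ![glσ₁, glσ₂]) <| by
    simp only [truncatedBraid3Rels, Set.mem_insert_iff, Set.mem_singleton_iff]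
    rintro r (rfl | rfl | rfl) <;>
      simp only [map_mul, map_inv, map_pow, FreeGroup.lift_apply_of] <;> decide +kernel

theorem normalForm_injective : Function.Injective (normalForm (σ₁ 4) (σ₂ 4)) := by
  refine Function.Injective.of_comp (f := toGL) ?_
  have hσ₁ : toGL (σ₁ 4) = glσ₁ := PresentedGroup.toGroup.of _
  have hσ₂ : toGL (σ₂ 4) = glσ₂ := PresentedGroup.toGroup.of _
  have : toGL ∘ normalForm (σ₁ 4) (σ₂ 4) = normalForm glσ₁ glσ₂ := by
    funext p
    rw [Function.comp_apply, map_normalForm, hσ₁, hσ₂]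
  rw [this]
  decide +kernel

end TruncatedBraid3

/-- The truncated braid group `B₃(4)` has order 96. -/
theorem truncatedBraid3_card_4 : Nat.card (TruncatedBraid3 4) = 96 := by
  rw [← Nat.card_eq_of_bijective _
    ⟨TruncatedBraid3.normalForm_injective, TruncatedBraid3.normalForm_surjective⟩]
  simp
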